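/- Let Γ be a simplicial complex and let γ be a nontrivial k-cycle (a cycle representing a nonzero class in reduced integral homology) in the d-clique complex Δ_d(Γ), with k ≥ d − 1. Then the simplicial complex Δ_d(Γ)(supp(γ)) generated by the support of γ contains at least (d+1)(k−d+1) + d + 1 faces of dimension d−1. -/

import Mathlib

open scoped BigOperators ENNReal

/-- An abstract simplicial complex on vertex type `V`: a downward-closed set of finsets. -/
structure Cx (V : Type*) where
  faces : Set (Finset V)
  down : ∀ ⦃s t : Finset V⦄, s ∈ faces → t ⊆ s → t ∈ faces

namespace Cx

variable {V : Type*}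

/-- `fcount K i` is the number of `i`-dimensional faces of `K`. -/
noncomputable def fcount (K : Cx V) (i : ℕ) : ℕ :=
  Nat.card {s : Finset V // s ∈ K.faces ∧ s.card = i + 1}

/-- Induced subcomplex on a vertex subset `S`. -/
def induced (K : Cx V) (S : Finset V) : Cx V :=
  ⟨{s | s ∈ K.faces ∧ s ⊆ S}, fun s t hs hts => ⟨K.down hs.1 hts, hts.trans hs.2⟩⟩

/-- The `d`-skeleton of a complex. -/
def skel (K : Cx V) (d : ℕ) : Cx V :=
  ⟨{s | s ∈ K.faces ∧ s.card ≤ d + 1}, fun s t hs hts =>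
    ⟨K.down hs.1 hts, le_trans (Finset.card_le_card hts) hs.2⟩⟩

/-- Number of vertices of a complex. -/
noncomputable def vertCount (K : Cx V) : ℕ := Nat.card {v : V // {v} ∈ K.faces}

/-- The link of a vertex. -/
def linkCx [DecidableEq V] (K : Cx V) (v : V) : Cx V :=
  ⟨{τ | v ∉ τ ∧ insert v τ ∈ K.faces},
   fun s t hs hts => ⟨fun h => hs.1 (hts h), K.down hs.2 (Finset.insert_subset_insert v hts)⟩⟩

end Cx

/-- The `(k+1)`-fold join `∂Δ_{d+1} * ⋯ * ∂Δ_{d+1}` of boundaries of `d`-simplices: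
a set of vertices is a face iff it misses at least one vertex of each join factor. -/
def Kjoin (d k : ℕ) : Cx (Fin (k+1) × Fin (d+1)) :=
  ⟨{s | ∀ m : Fin (k+1), ∃ i : Fin (d+1), (m, i) ∉ s},
   fun s t hs hts m => (hs m).imp fun _ hi h => hi (hts h)⟩

/-- The `d`-clique complex of `K`: faces are all vertex sets all of whose
`(d+1)`-subsets are faces of `K`. -/
def cliqueCx (d : ℕ) (K : Cx V) : Cx V :=
  ⟨{s | ∀ t ⊆ s, t.card = d + 1 → t ∈ K.faces},
   fun s t hs hts u hut hu => hs u (hut.trans hts) hu⟩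

section Chains

variable {V : Type*} [LinearOrder V]

/-- Simplicial boundary operator (with the augmentation convention: the boundary of a
vertex is the empty set with coefficient 1, so cycles compute *reduced* homology). -/
noncomputable def bdry (γ : Finset V →₀ ℤ) : Finset V →₀ ℤ :=
  γ.sum fun s c => ∑ v ∈ s, Finsupp.single (s.erase v)
    (c * (-1) ^ ((s.sort (· ≤ ·)).idxOf v))

/-- `γ` is a `k`-chain of the complex `K`. -/
def IsChainOf (K : Cx V) (k : ℕ) (γ : Finset V →₀ ℤ) : Prop :=
  ∀ s ∈ γ.support, s ∈ K.faces ∧ s.card = k + 1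

/-- `γ` is a (reduced) `k`-cycle of `K`. -/
def IsCycleOf (K : Cx V) (k : ℕ) (γ : Finset V →₀ ℤ) : Prop :=
  IsChainOf K k γ ∧ bdry γ = 0

/-- `γ` is a `k`-boundary in `K`. -/
def IsBoundaryOf (K : Cx V) (k : ℕ) (γ : Finset V →₀ ℤ) : Prop :=
  ∃ β, IsChainOf K (k+1) β ∧ bdry β = γ

/-- `γ` is a nontrivial `k`-cycle: it represents a nonzero class in reduced homology
`H̃ₖ(K; ℤ)`. -/
def IsNontrivialCycle (K : Cx V) (k : ℕ) (γ : Finset V →₀ ℤ) : Prop :=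
  IsCycleOf K k γ ∧ ¬ IsBoundaryOf K k γ

/-- The vertex support of a chain. -/
def vsupp (γ : Finset V →₀ ℤ) : Finset V := γ.support.biUnion id

/-- The restriction `γ ∩ link(v)` of a chain to the link of a vertex `v`: a `(k-1)`-face
`τ` gets the (signed) coefficient of `τ ∪ {v}` in `γ`. -/
noncomputable def restrictLink (v : V) (γ : Finset V →₀ ℤ) : Finset V →₀ ℤ :=
  γ.sum fun s c => if v ∈ s then
    Finsupp.single (s.erase v) (c * (-1) ^ ((s.sort (· ≤ ·)).idxOf v)) else 0

end Chains

section Topology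

open Classical in
/-- The geometric realization of a complex on a finite vertex set, as a subset of `V → ℝ`. -/
noncomputable def realizationSet {V : Type*} [Fintype V] (K : Cx V) : Set (V → ℝ) :=
  {f | (∀ v, 0 ≤ f v) ∧ (∑ v, f v) = 1 ∧ (Finset.univ.filter fun v => f v ≠ 0) ∈ K.faces}

/-- `K` is `k`-connected: every continuous map from a sphere `S^i`, `i ≤ k`, to the
geometric realization of `K` is nullhomotopic. -/
def KConn {V : Type*} [Fintype V] (K : Cx V) (k : ℕ) : Prop :=
  ∀ i ≤ k, ∀ f : C(Metric.sphere (0 : EuclideanSpace ℝ (Fin (i+1))) 1, realizationSet K),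
    ∃ y, ContinuousMap.Homotopic f (ContinuousMap.const _ y)

end Topology

section Domination

variable {V : Type*} [DecidableEq V]

/-- `s̃p_K(A)`: the set of vertices `v` for which some face `σ ⊆ A` satisfies
`σ ∪ {v} ∉ K`. -/
def spTilde (K : Cx V) (A : Finset V) : Set V :=
  {v | ∃ σ : Finset V, σ ∈ K.faces ∧ σ ⊆ A ∧ insert v σ ∉ K.faces}

/-- `A` is a strong dominating set of `K`. -/
def IsStrongDom (K : Cx V) (A : Finset V) : Prop := ∀ v : V, v ∈ spTilde K A

/-- The strong domination number `γ̃(K)` (`⊤` if there is no strong dominating set). -/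
noncomputable def gammaTilde (K : Cx V) : ℕ∞ :=
  sInf {n : ℕ∞ | ∃ A : Finset V, IsStrongDom K A ∧ (A.card : ℕ∞) = n}

end Domination

section StrongConn

variable {V : Type*} [DecidableEq V]

/-- A facet: a maximal face. -/
def IsFacet (K : Cx V) (s : Finset V) : Prop :=
  s ∈ K.faces ∧ ∀ t ∈ K.faces, s ⊆ t → t = s

/-- `K` is a strongly connected `k`-dimensional complex: pure of dimension `k` and any
two facets are joined by a chain of facets, consecutive ones sharing a `(k-1)`-face. -/
def StronglyConnected (K : Cx V) (k : ℕ) : Prop :=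
  (∃ s, s ∈ K.faces ∧ s.card = k + 1) ∧
  (∀ s, IsFacet K s → s.card = k + 1) ∧
  ∀ s t, IsFacet K s → IsFacet K t →
    Relation.ReflTransGen (fun a b => IsFacet K a ∧ IsFacet K b ∧ (a ∩ b).card = k) s t

end StrongConn

section Random

open MeasureTheory

/-- Bernoulli measure on `Bool` with parameter `p` (truncated at 1). -/
noncomputable def bern (p : ℝ≥0∞) : Measure Bool :=
  (PMF.bernoulli (min p 1).toNNReal
    (ENNReal.toNNReal_one ▸ ENNReal.toNNReal_mono ENNReal.one_ne_top (min_le_right _ _))).toMeasure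

instance (p : ℝ≥0∞) : IsProbabilityMeasure (bern p) := by
  unfold bern; infer_instance

/-- Sample space for the random complex `G_d(n,p)`: a coin for each potential `d`-face. -/
abbrev RandOmega (d n : ℕ) := {s : Finset (Fin n) // s.card = d + 1} → Bool

/-- The law of `G_d(n,p)`: independent Bernoulli(p) coins for the `d`-faces. -/
noncomputable def randMeasure (d n : ℕ) (p : ℝ≥0∞) : Measure (RandOmega d n) :=
  Measure.pi fun _ => bern p

/-- The random `d`-complex `G_d(n,p)` determined by the sample `ω`: full
`(d-1)`-skeleton, and the `d`-faces chosen by `ω`. -/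
def randCx (d n : ℕ) (ω : RandOmega d n) : Cx (Fin n) :=
  ⟨{s | s.card ≤ d ∨ ∃ h : s.card = d + 1, ω ⟨s, h⟩ = true}, by
    rintro s t hs hts
    rcases hs with h | ⟨h, hω⟩
    · exact Or.inl (le_trans (Finset.card_le_card hts) h)
    · have hle := Finset.card_le_card hts
      rcases eq_or_lt_of_le hle with heq | hlt
      · have : t = s := Finset.eq_of_subset_of_card_le hts (le_of_eq heq.symm)
        subst this; exact Or.inr ⟨h, hω⟩
      · exact Or.inl (by omega)⟩

end Random
namespace Stmt4Aux

variable {V : Type*} [LinearOrder V]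

/-- Sign of vertex `v` in simplex `s`, via the number of smaller elements. -/
def esgn (v : V) (s : Finset V) : ℤ := (-1) ^ (s.filter (· < v)).card

lemma sorted_indexOf (l : List V) (hs : l.Pairwise (· ≤ ·)) (hn : l.Nodup) (v : V) (hv : v ∈ l) :
    l.idxOf v = (l.filter (fun u => decide (u < v))).length := by
  induction l with
  | nil => simp at hv
  | cons a t ih =>
    rcases List.pairwise_cons.1 hs with ⟨ha, hts⟩
    rcases List.nodup_cons.1 hn with ⟨han, htn⟩
    by_cases hva : v = a
    · subst hva
      rw [List.idxOf_cons_self]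
      have hnl : ∀ u ∈ v :: t, ¬ (u < v) := by
        intro u hu
        rcases List.mem_cons.1 hu with rfl | hu
        · exact lt_irrefl _
        · exact not_lt_of_ge (ha u hu)
      have hfe : (v :: t).filter (fun u => decide (u < v)) = [] := by
        apply List.filter_eq_nil_iff.2
        intro u hu
        simpa using hnl u hu
      rw [hfe]; rfl
    · have hvt : v ∈ t := by
        rcases List.mem_cons.1 hv with h | h
        · exact absurd h hva
        · exact h
      have hav : a < v := lt_of_le_of_ne (ha v hvt) (fun h => hva (h.symm))
      rw [List.idxOf_cons_ne _ (fun h => hva h.symm)]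
      rw [List.filter_cons_of_pos (by simpa using hav)]
      simp [ih hts htn hvt]

lemma filter_card_eq_sort (s : Finset V) (v : V) :
    (s.filter (· < v)).card = ((s.sort (· ≤ ·)).filter (fun u => decide (u < v))).length := by
  classical
  rw [← List.countP_eq_length_filter]
  rw [(Finset.sort_perm_toList (s := s) (r := (· ≤ ·))).countP_eq]
  have : (s.toList.countP fun u => decide (u < v)) = Multiset.countP (· < v) s.val := by
    rw [← Multiset.coe_countP]
    congr 1
    exact Multiset.coe_toList _
  rw [this, Multiset.countP_eq_card_filter]
  rfl

lemma indexOf_sort_eq {s : Finset V} {v : V} (hv : v ∈ s) :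
    ((s.sort (· ≤ ·)).idxOf v) = (s.filter (· < v)).card := by
  rw [filter_card_eq_sort]
  exact sorted_indexOf _ (Finset.pairwise_sort (s := s) (r := (· ≤ ·))) (Finset.sort_nodup (s := s) (r := (· ≤ ·))) v
    ((Finset.mem_sort (r := (· ≤ ·))).2 hv)

lemma esgn_eq {s : Finset V} {v : V} (hv : v ∈ s) :
    ((-1 : ℤ) ^ ((s.sort (· ≤ ·)).idxOf v)) = esgn v s := by
  rw [indexOf_sort_eq hv]; rfl

lemma filter_erase_card {s : Finset V} {u : V} (v : V) (hu : u ∈ s) :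
    ((s.erase u).filter (· < v)).card + (if u < v then 1 else 0) = (s.filter (· < v)).card := by
  classical
  have h1 : (s.erase u).filter (· < v) = (s.filter (· < v)).erase u := by
    ext x; simp [Finset.mem_erase, Finset.mem_filter]; tauto
  by_cases huv : u < v
  · have hmem : u ∈ s.filter (· < v) := Finset.mem_filter.2 ⟨hu, huv⟩
    rw [h1, if_pos huv, Finset.card_erase_of_mem hmem]
    have : 1 ≤ (s.filter (· < v)).card := Finset.card_pos.2 ⟨u, hmem⟩
    omega
  · have hmem : u ∉ s.filter (· < v) := fun h => huv (Finset.mem_filter.1 h).2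
    rw [h1, if_neg huv, Finset.erase_eq_of_notMem hmem, add_zero]

lemma neg_one_pow_odd_sum {A B : ℕ} (h : Odd (A + B)) : ((-1 : ℤ) ^ A) = -(-1 : ℤ) ^ B := by
  have h1 : ((-1 : ℤ) ^ (A + B)) = -1 := Odd.neg_one_pow h
  have h2 : ((-1 : ℤ) ^ B) * ((-1 : ℤ) ^ B) = 1 := by
    rw [← pow_add]; exact Even.neg_one_pow ⟨B, by ring⟩
  have h3 : ((-1 : ℤ) ^ A) * ((-1 : ℤ) ^ B) = -1 := by rw [← pow_add]; exact h1
  calc ((-1 : ℤ) ^ A) = ((-1 : ℤ) ^ A) * (((-1 : ℤ) ^ B) * ((-1 : ℤ) ^ B)) := by rw [h2, mul_one]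
    _ = (((-1 : ℤ) ^ A) * ((-1 : ℤ) ^ B)) * ((-1 : ℤ) ^ B) := by ring
    _ = -(-1 : ℤ) ^ B := by rw [h3]; ring

/-- Anticommutation sign identity, first form. -/
lemma esgn_swap {s : Finset V} {u v : V} (hu : u ∈ s) (hv : v ∈ s) (hne : u ≠ v) :
    esgn u s * esgn v (s.erase u) = -(esgn v s * esgn u (s.erase v)) := by
  unfold esgn
  rw [← pow_add, ← pow_add]
  have h1 := filter_erase_card (s := s) (u := u) v hu
  have h2 := filter_erase_card (s := s) (u := v) u hv
  apply neg_one_pow_odd_sum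
  rw [Nat.odd_iff]
  rcases hne.lt_or_gt with h | h
  · rw [if_pos h] at h1
    rw [if_neg (not_lt_of_gt h)] at h2
    omega
  · rw [if_neg (not_lt_of_gt h)] at h1
    rw [if_pos h] at h2
    omega

/-- Anticommutation sign identity, second form. -/
lemma esgn_swap' {s : Finset V} {u v : V} (hu : u ∈ s) (hv : v ∈ s) (hne : u ≠ v) :
    esgn v s * esgn u s = -(esgn u (s.erase v) * esgn v (s.erase u)) := by
  unfold esgn
  rw [← pow_add, ← pow_add]
  have h1 := filter_erase_card (s := s) (u := u) v hu
  have h2 := filter_erase_card (s := s) (u := v) u hv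
  apply neg_one_pow_odd_sum
  rw [Nat.odd_iff]
  rcases hne.lt_or_gt with h | h
  · rw [if_pos h] at h1
    rw [if_neg (not_lt_of_gt h)] at h2
    omega
  · rw [if_neg (not_lt_of_gt h)] at h1
    rw [if_pos h] at h2
    omega

lemma esgn_sq (v : V) (s : Finset V) : esgn v s * esgn v s = 1 := by
  unfold esgn
  rw [← pow_add]
  exact Even.neg_one_pow ⟨_, by ring⟩


variable {V : Type*} [LinearOrder V]


/-- The cone over a chain with apex `v`; simplices containing `v` are killed. -/
noncomputable def cone (v : V) (γ : Finset V →₀ ℤ) : Finset V →₀ ℤ :=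
  γ.sum fun s c => if v ∈ s then 0 else
    Finsupp.single (insert v s) (c * esgn v (insert v s))

section lems

variable (v : V) (s : Finset V) (c : ℤ) (γ δ : Finset V →₀ ℤ)

lemma esgn_ne_zero (v : V) (s : Finset V) : esgn v s ≠ 0 :=
  pow_ne_zero _ (by norm_num)

lemma bdry_single : bdry (Finsupp.single s c) =
    ∑ u ∈ s, Finsupp.single (s.erase u) (c * esgn u s) := by
  unfold bdry
  rw [Finsupp.sum_single_index (by simp)]
  exact Finset.sum_congr rfl fun u hu => by rw [esgn_eq hu]

lemma restrictLink_single : restrictLink v (Finsupp.single s c) =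
    if v ∈ s then Finsupp.single (s.erase v) (c * esgn v s) else 0 := by
  unfold restrictLink
  rw [Finsupp.sum_single_index (by simp)]
  by_cases hv : v ∈ s
  · rw [if_pos hv, if_pos hv, esgn_eq hv]
  · rw [if_neg hv, if_neg hv]

lemma cone_single : cone v (Finsupp.single s c) =
    if v ∈ s then 0 else Finsupp.single (insert v s) (c * esgn v (insert v s)) := by
  unfold cone
  rw [Finsupp.sum_single_index]
  split <;> simp

lemma bdry_add : bdry (γ + δ) = bdry γ + bdry δ := by
  unfold bdry
  rw [Finsupp.sum_add_index' (by simp) (fun a b₁ b₂ => ?_)]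
  rw [← Finset.sum_add_distrib]
  exact Finset.sum_congr rfl fun u _ => by rw [← Finsupp.single_add, add_mul]

lemma restrictLink_add : restrictLink v (γ + δ) = restrictLink v γ + restrictLink v δ := by
  unfold restrictLink
  rw [Finsupp.sum_add_index' (by simp) (fun a b₁ b₂ => ?_)]
  split
  · rw [← Finsupp.single_add, add_mul]
  · rw [add_zero]

lemma cone_add : cone v (γ + δ) = cone v γ + cone v δ := by
  unfold cone
  rw [Finsupp.sum_add_index' (by simp) (fun a b₁ b₂ => ?_)]
  split
  · rw [add_zero]
  · rw [← Finsupp.single_add, add_mul]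

end lems

noncomputable def bdryHom : (Finset V →₀ ℤ) →+ (Finset V →₀ ℤ) :=
  AddMonoidHom.mk' bdry (fun γ δ => bdry_add γ δ)

noncomputable def rlHom (v : V) : (Finset V →₀ ℤ) →+ (Finset V →₀ ℤ) :=
  AddMonoidHom.mk' (restrictLink v) (fun γ δ => restrictLink_add v γ δ)

noncomputable def coneHom (v : V) : (Finset V →₀ ℤ) →+ (Finset V →₀ ℤ) :=
  AddMonoidHom.mk' (cone v) (fun γ δ => cone_add v γ δ)

@[simp] lemma bdryHom_apply (γ : Finset V →₀ ℤ) : bdryHom γ = bdry γ := rfl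
@[simp] lemma rlHom_apply (v : V) (γ : Finset V →₀ ℤ) : rlHom v γ = restrictLink v γ := rfl
@[simp] lemma coneHom_apply (v : V) (γ : Finset V →₀ ℤ) : coneHom v γ = cone v γ := rfl


lemma sum_erase_ite {α β : Type*} [DecidableEq α] [AddCommMonoid β] (s : Finset α) (u : α)
    (f : α → β) : ∑ w ∈ s.erase u, f w = ∑ w ∈ s, if w ≠ u then f w else 0 := by
  rw [Finset.sum_ite, Finset.sum_const_zero, add_zero, Finset.filter_ne']

/-- `∂∘∂ = 0` on a single simplex. -/
lemma bdry_bdry_single (s : Finset V) (c : ℤ) : bdry (bdry (Finsupp.single s c)) = 0 := by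
  classical
  rw [bdry_single]
  calc bdry (∑ u ∈ s, Finsupp.single (s.erase u) (c * esgn u s))
      = ∑ u ∈ s, bdry (Finsupp.single (s.erase u) (c * esgn u s)) :=
        map_sum bdryHom _ s
    _ = ∑ u ∈ s, ∑ w ∈ s.erase u,
          Finsupp.single ((s.erase u).erase w) (c * esgn u s * esgn w (s.erase u)) := by
        refine Finset.sum_congr rfl fun u _ => ?_
        rw [bdry_single]
    _ = ∑ u ∈ s, ∑ w ∈ s, (if w ≠ u then
          Finsupp.single ((s.erase u).erase w) (c * esgn u s * esgn w (s.erase u)) else 0) := by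
        refine Finset.sum_congr rfl fun u _ => ?_
        exact sum_erase_ite s u _
    _ = ∑ p ∈ s ×ˢ s, (if p.2 ≠ p.1 then
          Finsupp.single ((s.erase p.1).erase p.2)
            (c * esgn p.1 s * esgn p.2 (s.erase p.1)) else 0) :=
        by rw [Finset.sum_product]
    _ = 0 := by
        refine Finset.sum_involution (fun p _ => (p.2, p.1)) (fun p hp => ?_)
          (fun p hp hne => ?_) (fun p hp => ?_) (fun p hp => rfl)
        · rcases Finset.mem_product.1 hp with ⟨h1, h2⟩
          by_cases hne : p.2 = p.1
          · simp [hne]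
          · rw [if_pos hne, if_pos (Ne.symm hne)]
            rw [Finset.erase_right_comm (a := p.2) (b := p.1)]
            rw [← Finsupp.single_add]
            have hswap := esgn_swap (s := s) (u := p.1) (v := p.2) h1 h2 (Ne.symm hne)
            have hz : c * esgn p.1 s * esgn p.2 (s.erase p.1)
                + c * esgn p.2 s * esgn p.1 (s.erase p.2) = 0 := by
              linear_combination (c : ℤ) * hswap
            rw [hz, Finsupp.single_zero]
        · by_cases h : p.2 = p.1
          · rw [if_neg (by simpa using h)] at hne; exact absurd rfl hne
          · exact fun heq => h (congrArg Prod.fst heq)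
        · rcases Finset.mem_product.1 hp with ⟨h1, h2⟩
          exact Finset.mem_product.2 ⟨h2, h1⟩

lemma bdry_bdry (γ : Finset V →₀ ℤ) : bdry (bdry γ) = 0 := by
  have : (bdryHom.comp bdryHom : (Finset V →₀ ℤ) →+ (Finset V →₀ ℤ)) = 0 :=
    Finsupp.addHom_ext fun s c => bdry_bdry_single s c
  exact DFunLike.congr_fun this γ

/-- `∂ ∘ ι_v = −(ι_v ∘ ∂)` on a single simplex. -/
lemma rl_bdry_single (v : V) (s : Finset V) (c : ℤ) :
    bdry (restrictLink v (Finsupp.single s c)) =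
      - restrictLink v (bdry (Finsupp.single s c)) := by
  classical
  rw [restrictLink_single, bdry_single]
  have hrl : restrictLink v (∑ u ∈ s, Finsupp.single (s.erase u) (c * esgn u s))
      = ∑ u ∈ s, restrictLink v (Finsupp.single (s.erase u) (c * esgn u s)) :=
    map_sum (rlHom v) _ s
  rw [hrl]
  by_cases hv : v ∈ s
  · rw [if_pos hv]
    have hsplit : ∑ u ∈ s, restrictLink v (Finsupp.single (s.erase u) (c * esgn u s))
        = restrictLink v (Finsupp.single (s.erase v) (c * esgn v s)) +
          ∑ u ∈ s.erase v, restrictLink v (Finsupp.single (s.erase u) (c * esgn u s)) :=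
      (Finset.add_sum_erase s _ hv).symm
    rw [hsplit, restrictLink_single, if_neg (Finset.notMem_erase v s), zero_add,
      eq_neg_iff_add_eq_zero, bdry_single, ← Finset.sum_add_distrib]
    apply Finset.sum_eq_zero
    intro u hu
    rcases Finset.mem_erase.1 hu with ⟨hne, hus⟩
    rw [restrictLink_single, if_pos (Finset.mem_erase.2 ⟨Ne.symm hne, hv⟩)]
    rw [Finset.erase_right_comm (a := u) (b := v), ← Finsupp.single_add]
    have hswap := esgn_swap (s := s) (u := u) (v := v) hus hv hne
    have hz : c * esgn v s * esgn u (s.erase v) + c * esgn u s * esgn v (s.erase u) = 0 := by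
      linear_combination (c : ℤ) * hswap
    rw [hz, Finsupp.single_zero]
  · rw [if_neg hv]
    have h0 : bdry (0 : Finset V →₀ ℤ) = 0 := map_zero bdryHom
    rw [h0, Finset.sum_eq_zero, neg_zero]
    intro u hu
    rw [restrictLink_single, if_neg (fun h => hv (Finset.mem_of_mem_erase h))]

lemma rl_bdry (v : V) (γ : Finset V →₀ ℤ) :
    bdry (restrictLink v γ) = - restrictLink v (bdry γ) := by
  have : (bdryHom.comp (rlHom v) : (Finset V →₀ ℤ) →+ (Finset V →₀ ℤ))
      = -((rlHom v).comp bdryHom) := by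
    refine Finsupp.addHom_ext fun s c => ?_
    simpa using rl_bdry_single v s c
  simpa using DFunLike.congr_fun this γ

/-- `∂ ∘ C_v + C_v ∘ ∂ = id` on a single simplex. -/
lemma cone_bdry_single (v : V) (s : Finset V) (c : ℤ) :
    bdry (cone v (Finsupp.single s c)) + cone v (bdry (Finsupp.single s c)) =
      Finsupp.single s c := by
  classical
  rw [cone_single, bdry_single]
  have hcone : cone v (∑ u ∈ s, Finsupp.single (s.erase u) (c * esgn u s))
      = ∑ u ∈ s, cone v (Finsupp.single (s.erase u) (c * esgn u s)) :=
    map_sum (coneHom v) _ s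
  rw [hcone]
  by_cases hv : v ∈ s
  · rw [if_pos hv]
    have h0 : bdry (0 : Finset V →₀ ℤ) = 0 := map_zero bdryHom
    rw [h0, zero_add]
    have hsplit : ∑ u ∈ s, cone v (Finsupp.single (s.erase u) (c * esgn u s))
        = cone v (Finsupp.single (s.erase v) (c * esgn v s)) +
          ∑ u ∈ s.erase v, cone v (Finsupp.single (s.erase u) (c * esgn u s)) :=
      (Finset.add_sum_erase s _ hv).symm
    rw [hsplit, cone_single, if_neg (Finset.notMem_erase v s), Finset.insert_erase hv]
    have hrest : ∑ u ∈ s.erase v, cone v (Finsupp.single (s.erase u) (c * esgn u s)) = 0 := by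
      apply Finset.sum_eq_zero
      intro u hu
      rcases Finset.mem_erase.1 hu with ⟨hne, _⟩
      rw [cone_single, if_pos (Finset.mem_erase.2 ⟨Ne.symm hne, hv⟩)]
    rw [hrest, add_zero, mul_assoc, esgn_sq, mul_one]
  · rw [if_neg hv, bdry_single]
    have hins : v ∈ insert v s := Finset.mem_insert_self v s
    have hsplit : ∑ u ∈ insert v s, Finsupp.single ((insert v s).erase u)
          (c * esgn v (insert v s) * esgn u (insert v s))
        = Finsupp.single ((insert v s).erase v)
            (c * esgn v (insert v s) * esgn v (insert v s)) +
          ∑ u ∈ (insert v s).erase v, Finsupp.single ((insert v s).erase u)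
            (c * esgn v (insert v s) * esgn u (insert v s)) :=
      (Finset.add_sum_erase _ _ hins).symm
    have hc : c * esgn v (insert v s) * esgn v (insert v s) = c := by
      rw [mul_assoc, esgn_sq, mul_one]
    rw [hsplit, Finset.erase_insert hv, hc, add_assoc, add_eq_left,
      ← Finset.sum_add_distrib]
    apply Finset.sum_eq_zero
    intro u hu
    have hune : u ≠ v := fun h => hv (h ▸ hu)
    have hvna : v ∉ s.erase u := fun h => hv (Finset.mem_of_mem_erase h)
    rw [cone_single, if_neg hvna]
    have hie : insert v (s.erase u) = (insert v s).erase u :=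
      (Finset.erase_insert_of_ne (Ne.symm hune)).symm
    rw [hie, ← Finsupp.single_add]
    have hus' : u ∈ insert v s := Finset.mem_insert_of_mem hu
    have hswap := esgn_swap' (s := insert v s) (u := u) (v := v) hus' hins hune
    rw [Finset.erase_insert hv] at hswap
    have hz : c * esgn v (insert v s) * esgn u (insert v s)
        + c * esgn u s * esgn v ((insert v s).erase u) = 0 := by
      linear_combination (c : ℤ) * hswap
    rw [hz, Finsupp.single_zero]

lemma cone_bdry (v : V) (γ : Finset V →₀ ℤ) :
    bdry (cone v γ) + cone v (bdry γ) = γ := by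
  have : (bdryHom.comp (coneHom v) + (coneHom v).comp bdryHom
      : (Finset V →₀ ℤ) →+ (Finset V →₀ ℤ)) = AddMonoidHom.id _ := by
    refine Finsupp.addHom_ext fun s c => ?_
    simpa using cone_bdry_single v s c
  simpa using DFunLike.congr_fun this γ

lemma rl_cone_single (v : V) (s : Finset V) (c : ℤ) (hv : v ∉ s) :
    restrictLink v (cone v (Finsupp.single s c)) = Finsupp.single s c := by
  rw [cone_single, if_neg hv, restrictLink_single, if_pos (Finset.mem_insert_self v s),
    Finset.erase_insert hv, mul_assoc, esgn_sq, mul_one]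


section apply

variable {V : Type*} [LinearOrder V]

lemma restrictLink_apply_of_mem (v : V) (γ : Finset V →₀ ℤ) (τ : Finset V) (hv : v ∈ τ) :
    (restrictLink v γ) τ = 0 := by
  classical
  unfold restrictLink
  rw [Finsupp.sum_apply]
  apply Finset.sum_eq_zero
  intro s hs
  dsimp only
  by_cases h : v ∈ s
  · rw [if_pos h]
    exact Finsupp.single_eq_of_ne' (fun he => (he ▸ Finset.notMem_erase v s) hv)
  · rw [if_neg h]; rfl

lemma restrictLink_apply (v : V) (γ : Finset V →₀ ℤ) (τ : Finset V) (hv : v ∉ τ) :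
    (restrictLink v γ) τ = γ (insert v τ) * esgn v (insert v τ) := by
  classical
  unfold restrictLink
  rw [Finsupp.sum_apply]
  rw [Finsupp.sum]
  rw [Finset.sum_eq_single (insert v τ)]
  · rw [if_pos (Finset.mem_insert_self v τ), esgn_eq (Finset.mem_insert_self v τ),
      Finset.erase_insert hv, Finsupp.single_eq_same]
  · intro b _ hbne
    by_cases h : v ∈ b
    · rw [if_pos h]
      refine Finsupp.single_eq_of_ne' (fun he => hbne ?_)
      rw [← he, Finset.insert_erase h]
    · rw [if_neg h]; rfl
  · intro ha
    rw [Finsupp.notMem_support_iff.1 ha]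
    simp

lemma mem_support_rl {v : V} {γ : Finset V →₀ ℤ} {τ : Finset V} :
    τ ∈ (restrictLink v γ).support ↔ v ∉ τ ∧ insert v τ ∈ γ.support := by
  constructor
  · intro h
    have hne := Finsupp.mem_support_iff.1 h
    by_cases hv : v ∈ τ
    · exact absurd (restrictLink_apply_of_mem v γ τ hv) hne
    · refine ⟨hv, Finsupp.mem_support_iff.2 fun h0 => hne ?_⟩
      rw [restrictLink_apply v γ τ hv, h0, zero_mul]
  · rintro ⟨hv, hmem⟩
    refine Finsupp.mem_support_iff.2 ?_
    rw [restrictLink_apply v γ τ hv]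
    exact mul_ne_zero (Finsupp.mem_support_iff.1 hmem) (esgn_ne_zero _ _)

lemma support_rl (v : V) (γ : Finset V →₀ ℤ) :
    (restrictLink v γ).support =
      (γ.support.filter (fun s => v ∈ s)).image (fun s => s.erase v) := by
  classical
  ext τ
  rw [mem_support_rl, Finset.mem_image]
  constructor
  · rintro ⟨hv, hmem⟩
    exact ⟨insert v τ, Finset.mem_filter.2 ⟨hmem, Finset.mem_insert_self v τ⟩,
      Finset.erase_insert hv⟩
  · rintro ⟨s, hs, rfl⟩
    rcases Finset.mem_filter.1 hs with ⟨hsupp, hvs⟩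
    exact ⟨Finset.notMem_erase v s,
      by show insert v (s.erase v) ∈ _; rw [Finset.insert_erase hvs]; exact hsupp⟩

lemma card_support_rl (v : V) (γ : Finset V →₀ ℤ) :
    (restrictLink v γ).support.card = (γ.support.filter (fun s => v ∈ s)).card := by
  classical
  rw [support_rl]
  apply Finset.card_image_of_injOn
  intro s hs t ht he
  rcases Finset.mem_filter.1 hs with ⟨_, hvs⟩
  rcases Finset.mem_filter.1 ht with ⟨_, hvt⟩
  have he' : s.erase v = t.erase v := he
  rw [← Finset.insert_erase hvs, ← Finset.insert_erase hvt, he']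

lemma cone_apply (v : V) (γ : Finset V →₀ ℤ) (t : Finset V) :
    (cone v γ) t = if v ∈ t then γ (t.erase v) * esgn v t else 0 := by
  classical
  unfold cone
  rw [Finsupp.sum_apply, Finsupp.sum]
  by_cases hvt : v ∈ t
  · rw [if_pos hvt, Finset.sum_eq_single (t.erase v)]
    · rw [if_neg (Finset.notMem_erase v t), Finset.insert_erase hvt, Finsupp.single_eq_same]
    · intro b _ hbne
      by_cases h : v ∈ b
      · rw [if_pos h]; rfl
      · rw [if_neg h]
        refine Finsupp.single_eq_of_ne' (fun he => hbne ?_)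
        rw [← he, Finset.erase_insert h]
    · intro ha
      rw [Finsupp.notMem_support_iff.1 ha]
      simp
  · rw [if_neg hvt]
    apply Finset.sum_eq_zero
    intro s hs
    by_cases h : v ∈ s
    · rw [if_pos h]; rfl
    · rw [if_neg h]
      exact Finsupp.single_eq_of_ne' (fun he => hvt (he ▸ Finset.mem_insert_self v s))

lemma mem_support_cone {v : V} {γ : Finset V →₀ ℤ} {t : Finset V}
    (h : t ∈ (cone v γ).support) : v ∈ t ∧ t.erase v ∈ γ.support := by
  have hne := Finsupp.mem_support_iff.1 h
  rw [cone_apply] at hne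
  by_cases hvt : v ∈ t
  · rw [if_pos hvt] at hne
    exact ⟨hvt, Finsupp.mem_support_iff.2 fun h0 => hne (by rw [h0, zero_mul])⟩
  · exact absurd (if_neg hvt) hne

end apply

section cycles

variable {V : Type*} [LinearOrder V]

/-- A nonzero pure cycle of dimension `m` (simplices have `m+1` vertices). -/
def PureCycle (m : ℕ) (δ : Finset V →₀ ℤ) : Prop :=
  δ ≠ 0 ∧ (∀ s ∈ δ.support, s.card = m + 1) ∧ bdry δ = 0

lemma PureCycle.exists_vertex {m : ℕ} {δ : Finset V →₀ ℤ} (h : PureCycle m δ) :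
    ∃ s ∈ δ.support, ∃ v : V, v ∈ s := by
  rcases Finsupp.support_nonempty_iff.2 h.1 with ⟨s, hs⟩
  have : s.card = m + 1 := h.2.1 s hs
  have : s.Nonempty := Finset.card_pos.1 (by omega)
  exact ⟨s, hs, this⟩

lemma PureCycle.rl {m : ℕ} {δ : Finset V →₀ ℤ} (h : PureCycle (m+1) δ)
    {v : V} {s₀ : Finset V} (hs₀ : s₀ ∈ δ.support) (hv : v ∈ s₀) :
    PureCycle m (restrictLink v δ) := by
  refine ⟨?_, ?_, ?_⟩
  · intro h0
    have : s₀.erase v ∈ (restrictLink v δ).support :=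
      mem_support_rl.2 ⟨Finset.notMem_erase v s₀, by rw [Finset.insert_erase hv]; exact hs₀⟩
    rw [h0] at this
    simp at this
  · intro τ hτ
    rcases mem_support_rl.1 hτ with ⟨hvτ, hmem⟩
    have := h.2.1 _ hmem
    rw [Finset.card_insert_of_notMem hvτ] at this
    omega
  · rw [rl_bdry, h.2.2]
    have : restrictLink v (0 : Finset V →₀ ℤ) = 0 := map_zero (rlHom v)
    rw [this, neg_zero]

lemma PureCycle.exists_not_mem {m : ℕ} {δ : Finset V →₀ ℤ} (h : PureCycle m δ) (v : V) :
    ∃ s ∈ δ.support, v ∉ s := by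
  by_contra hall
  push_neg at hall
  have hcone : cone v δ = 0 := by
    unfold cone
    rw [Finsupp.sum]
    apply Finset.sum_eq_zero
    intro s hs
    rw [if_pos (hall s hs)]
  have := cone_bdry v δ
  rw [hcone, h.2.2] at this
  have h1 : bdry (0 : Finset V →₀ ℤ) = 0 := map_zero bdryHom
  have h2 : cone v (0 : Finset V →₀ ℤ) = 0 := map_zero (coneHom v)
  rw [h1, h2, add_zero] at this
  exact h.1 this.symm

lemma PureCycle.support_card {m : ℕ} {δ : Finset V →₀ ℤ} (h : PureCycle m δ) :
    m + 2 ≤ δ.support.card := by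
  classical
  induction m generalizing δ with
  | zero =>
    rcases h.exists_vertex with ⟨s₀, hs₀, v, hv⟩
    rcases h.exists_not_mem v with ⟨s₁, hs₁, hv₁⟩
    have hne : s₀ ≠ s₁ := fun he => hv₁ (he ▸ hv)
    have : {s₀, s₁} ⊆ δ.support := by
      intro x hx
      rcases Finset.mem_insert.1 hx with rfl | hx
      · exact hs₀
      · exact (Finset.mem_singleton.1 hx) ▸ hs₁
    calc 2 = ({s₀, s₁} : Finset (Finset V)).card := by
            rw [Finset.card_insert_of_notMem (by simpa using hne), Finset.card_singleton]
      _ ≤ _ := Finset.card_le_card this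
  | succ m ih =>
    rcases h.exists_vertex with ⟨s₀, hs₀, v, hv⟩
    have hrl := h.rl hs₀ hv
    have h1 : m + 2 ≤ (δ.support.filter (fun s => v ∈ s)).card := by
      rw [← card_support_rl]; exact ih hrl
    have h2 : 1 ≤ (δ.support.filter (fun s => v ∉ s)).card := by
      rcases h.exists_not_mem v with ⟨s₁, hs₁, hv₁⟩
      exact Finset.card_pos.2 ⟨s₁, Finset.mem_filter.2 ⟨hs₁, hv₁⟩⟩
    have h3 := Finset.card_filter_add_card_filter_not
      (s := δ.support) (p := fun s => v ∈ s)
    have h4 : (δ.support.filter (fun s => ¬ v ∈ s)).card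
        = (δ.support.filter (fun s => v ∉ s)).card := rfl
    omega

end cycles


end Stmt4Aux

namespace Stmt4Aux

section core2

variable {V : Type*} [LinearOrder V]

lemma mem_support_bdry {β : Finset V →₀ ℤ} {t : Finset V} (h : t ∈ (bdry β).support) :
    ∃ s ∈ β.support, ∃ u ∈ s, t = s.erase u := by
  classical
  unfold bdry at h
  have h1 := Finsupp.support_sum h
  rcases Finset.mem_biUnion.1 h1 with ⟨s, hs, hts⟩
  refine ⟨s, hs, ?_⟩
  rcases Finsupp.mem_support_finset_sum t hts with ⟨u, hu, htu⟩
  exact ⟨u, hu, Finset.mem_singleton.1 (Finsupp.support_single_subset htu)⟩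

/-- `ι_v (C_v β) = β` for `v`-free chains `β`. -/
lemma rl_cone (v : V) (β : Finset V →₀ ℤ) (hβ : ∀ s ∈ β.support, v ∉ s) :
    restrictLink v (cone v β) = β := by
  classical
  induction β using Finsupp.induction with
  | zero =>
    have hz : cone v (0 : Finset V →₀ ℤ) = 0 := by simpa using map_zero (coneHom v)
    rw [hz]
    simpa using map_zero (rlHom v)
  | single_add s c f hs hc ih =>
    have hvs : v ∉ s := hβ s (by
      rw [Finsupp.support_add_eq]
      · exact Finset.mem_union_left _ (by simp [hc])
      · rw [Finsupp.support_single_ne_zero s hc]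
        simpa using hs)
    have hf : ∀ s' ∈ f.support, v ∉ s' := fun s' hs' => hβ s' (by
      rw [Finsupp.support_add_eq]
      · exact Finset.mem_union_right _ hs'
      · rw [Finsupp.support_single_ne_zero s hc]
        simpa using hs)
    rw [cone_add, restrictLink_add, rl_cone_single v s c hvs, ih hf]

lemma rl_eq_zero_vfree {v : V} {δ : Finset V →₀ ℤ} (h : restrictLink v δ = 0) :
    ∀ s ∈ δ.support, v ∉ s := by
  intro s hs hv
  have : s.erase v ∈ (restrictLink v δ).support :=
    mem_support_rl.2 ⟨Finset.notMem_erase v s, by rw [Finset.insert_erase hv]; exact hs⟩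
  rw [h] at this
  simp at this

end core2

end Stmt4Aux

namespace Stmt4Aux

section counting

variable {V : Type*} [LinearOrder V]

/-- The set of `j`-element subsets of simplices in the support of a chain. -/
def Tset (j : ℕ) (δ : Finset V →₀ ℤ) : Finset (Finset V) :=
  δ.support.biUnion fun s => s.powersetCard j

lemma mem_Tset {j : ℕ} {δ : Finset V →₀ ℤ} {t : Finset V} :
    t ∈ Tset j δ ↔ (∃ s ∈ δ.support, t ⊆ s) ∧ t.card = j := by
  unfold Tset
  rw [Finset.mem_biUnion]
  constructor
  · rintro ⟨s, hs, ht⟩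
    rcases Finset.mem_powersetCard.1 ht with ⟨h1, h2⟩
    exact ⟨⟨s, hs, h1⟩, h2⟩
  · rintro ⟨⟨s, hs, h1⟩, h2⟩
    exact ⟨s, hs, Finset.mem_powersetCard.2 ⟨h1, h2⟩⟩

lemma Tset_rl_subset (j : ℕ) (v : V) (δ : Finset V →₀ ℤ) :
    Tset j (restrictLink v δ) ⊆ Tset j δ := by
  intro t ht
  rcases mem_Tset.1 ht with ⟨⟨τ, hτ, htτ⟩, hc⟩
  rcases mem_support_rl.1 hτ with ⟨hvτ, hmem⟩
  exact mem_Tset.2 ⟨⟨insert v τ, hmem, htτ.trans (Finset.subset_insert v τ)⟩, hc⟩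

lemma Tset_rl_not_mem_v {j : ℕ} {v : V} {δ : Finset V →₀ ℤ} {t : Finset V}
    (ht : t ∈ Tset j (restrictLink v δ)) : v ∉ t := by
  rcases mem_Tset.1 ht with ⟨⟨τ, hτ, htτ⟩, _⟩
  rcases mem_support_rl.1 hτ with ⟨hvτ, _⟩
  exact fun hvt => hvτ (htτ hvt)

/-- The main counting inequality: `j`-sets and `(j-1)`-sets of the link cycle, together
with extra `v`-free `j`-sets not coming from the link, give distinct `j`-sets of `δ`. -/
lemma card_Tset_ge (j : ℕ) (hj : 1 ≤ j) (v : V) (δ : Finset V →₀ ℤ)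
    (extra : Finset (Finset V)) (hex : extra ⊆ Tset j δ)
    (hex1 : ∀ t ∈ extra, v ∉ t) (hex2 : ∀ t ∈ extra, t ∉ Tset j (restrictLink v δ)) :
    (Tset j (restrictLink v δ)).card + (Tset (j-1) (restrictLink v δ)).card + extra.card
      ≤ (Tset j δ).card := by
  classical
  set A := Tset j (restrictLink v δ) with hA
  set B := (Tset (j-1) (restrictLink v δ)).image (insert v) with hB
  have hBsub : B ⊆ Tset j δ := by
    intro t ht
    rcases Finset.mem_image.1 ht with ⟨ρ, hρ, rfl⟩
    rcases mem_Tset.1 hρ with ⟨⟨τ, hτ, hρτ⟩, hc⟩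
    rcases mem_support_rl.1 hτ with ⟨hvτ, hmem⟩
    have hvρ : v ∉ ρ := fun hv => hvτ (hρτ hv)
    refine mem_Tset.2 ⟨⟨insert v τ, hmem, ?_⟩, ?_⟩
    · exact Finset.insert_subset_insert v hρτ
    · rw [Finset.card_insert_of_notMem hvρ, hc]; omega
  have hvB : ∀ t ∈ B, v ∈ t := by
    intro t ht
    rcases Finset.mem_image.1 ht with ⟨ρ, _, rfl⟩
    exact Finset.mem_insert_self v ρ
  have hcardB : B.card = (Tset (j-1) (restrictLink v δ)).card := by
    apply Finset.card_image_of_injOn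
    intro x hx y hy he
    have hvx : v ∉ x := Tset_rl_not_mem_v hx
    have hvy : v ∉ y := Tset_rl_not_mem_v hy
    have : (insert v x).erase v = (insert v y).erase v := by rw [he]
    rwa [Finset.erase_insert hvx, Finset.erase_insert hvy] at this
  have hdAB : Disjoint A B :=
    Finset.disjoint_left.2 fun t htA htB => (Tset_rl_not_mem_v htA) (hvB t htB)
  have hdABE : Disjoint (A ∪ B) extra := by
    rw [Finset.disjoint_union_left]
    constructor
    · exact Finset.disjoint_left.2 fun t htA htE => (hex2 t htE) htA
    · exact Finset.disjoint_left.2 fun t htB htE => (hex1 t htE) (hvB t htB)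
  have hsub : A ∪ B ∪ extra ⊆ Tset j δ := by
    intro t ht
    rcases Finset.mem_union.1 ht with h | h
    · rcases Finset.mem_union.1 h with h | h
      · exact Tset_rl_subset j v δ h
      · exact hBsub h
    · exact hex h
  calc A.card + (Tset (j-1) (restrictLink v δ)).card + extra.card
      = A.card + B.card + extra.card := by rw [hcardB]
    _ = (A ∪ B ∪ extra).card := by
        rw [Finset.card_union_of_disjoint hdABE, Finset.card_union_of_disjoint hdAB]
    _ ≤ (Tset j δ).card := Finset.card_le_card hsub

lemma Tset_top {m : ℕ} {δ : Finset V →₀ ℤ} (h : ∀ s ∈ δ.support, s.card = m + 1) :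
    Tset (m+1) δ = δ.support := by
  ext t
  rw [mem_Tset]
  constructor
  · rintro ⟨⟨s, hs, hts⟩, hc⟩
    have := h s hs
    have : t = s := Finset.eq_of_subset_of_card_le hts (by omega)
    exact this ▸ hs
  · intro ht
    exact ⟨⟨t, ht, Finset.Subset.refl t⟩, h t ht⟩

lemma Tset_zero_card {δ : Finset V →₀ ℤ} (h : δ ≠ 0) : 1 ≤ (Tset 0 δ).card := by
  rcases Finsupp.support_nonempty_iff.2 h with ⟨s, hs⟩
  exact Finset.card_pos.2 ⟨∅, mem_Tset.2 ⟨⟨s, hs, Finset.empty_subset s⟩, Finset.card_empty⟩⟩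

lemma Tset_facets {m : ℕ} {δ : Finset V →₀ ℤ} (h : PureCycle m δ) :
    m + 1 ≤ (Tset m δ).card := by
  rcases Finsupp.support_nonempty_iff.2 h.1 with ⟨s, hs⟩
  have hsub : s.powersetCard m ⊆ Tset m δ := by
    intro t ht
    exact Finset.mem_biUnion.2 ⟨s, hs, ht⟩
  have hcard : (s.powersetCard m).card = m + 1 := by
    rw [Finset.card_powersetCard, h.2.1 s hs, Nat.choose_succ_self_right]
  calc m + 1 = (s.powersetCard m).card := hcard.symm
    _ ≤ _ := Finset.card_le_card hsub

/-- Lower-bound function for `(Tset j).card + (Tset (j-1)).card` over nonzero `m`-cycles. -/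
def Gfun (j m : ℕ) : ℕ :=
  if j = 0 then 1 else if j = 1 then m+3 else (j+1)*(m+2-j) + j

lemma Gfun_ge_add_two {i m : ℕ} (h1 : 1 ≤ i) (h2 : i ≤ m+1) : i + 2 ≤ Gfun i m := by
  unfold Gfun
  rcases Nat.eq_or_lt_of_le h1 with h | h
  · rw [if_neg (by omega), if_pos (by omega)]; omega
  · rw [if_neg (by omega), if_neg (by omega)]
    have e1 : m+2-i = (m+1-i)+1 := by omega
    rw [e1]
    have : (i+1)*((m+1-i)+1) = (i+1)*(m+1-i) + (i+1) := by ring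
    omega

lemma Gfun_succ_eq {j m : ℕ} (h1 : 2 ≤ j) (h2 : j ≤ m+1) :
    Gfun j (m+1) = Gfun j m + (j+1) := by
  unfold Gfun
  rw [if_neg (by omega), if_neg (by omega), if_neg (by omega), if_neg (by omega)]
  have e1 : m+1+2-j = (m+2-j)+1 := by omega
  rw [e1]
  have e2 : (j+1)*((m+2-j)+1) = (j+1)*(m+2-j) + (j+1) := by ring
  omega

lemma Gfun_step {j m : ℕ} (h1 : 2 ≤ j) (h2 : j ≤ m+1) :
    Gfun j (m+1) ≤ Gfun j m + Gfun (j-1) m := by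
  have hg : j + 1 ≤ Gfun (j-1) m := by
    have := Gfun_ge_add_two (i := j-1) (m := m) (by omega) (by omega)
    omega
  have := Gfun_succ_eq h1 h2
  omega

lemma Glemma : ∀ m : ℕ, ∀ j : ℕ, 1 ≤ j → j ≤ m+1 → ∀ δ : Finset V →₀ ℤ, PureCycle m δ →
    Gfun j m ≤ (Tset j δ).card + (Tset (j-1) δ).card := by
  intro m
  induction m with
  | zero =>
    intro j hj1 hj2 δ h
    have hj : j = 1 := by omega
    subst hj
    have h1 : Tset 1 δ = δ.support := Tset_top h.2.1
    have h2 := h.support_card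
    have h3 := Tset_zero_card h.1
    have : Gfun 1 0 = 3 := rfl
    have e0 : (Tset (1-1) δ).card = (Tset 0 δ).card := rfl
    rw [this, h1]
    omega
  | succ m ih =>
    intro j hj1 hj2 δ h
    rcases Nat.eq_or_lt_of_le hj2 with htop | hlt
    · -- top case j = m+2
      subst htop
      have h1 : Tset (m+2) δ = δ.support := Tset_top h.2.1
      have h2 := h.support_card
      have h3 : (m+1) + 1 ≤ (Tset (m+1) δ).card := Tset_facets h
      have hG : Gfun (m+2) (m+1) ≤ 2*m+5 := by
        unfold Gfun
        rw [if_neg (by omega), if_neg (by omega)]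
        have e : m+1+2-(m+2) = 1 := by omega
        rw [e]
        have e2 : (m+2+1)*1 = m+3 := by ring
        omega
      have hj' : m+2-1 = m+1 := by omega
      have ebr : Gfun (m+1+1) (m+1) = Gfun (m+2) (m+1) := rfl
      have ebr2 : (Tset (m+1+1) δ).card = (Tset (m+2) δ).card := rfl
      rw [hj', h1]
      omega
    · -- j ≤ m+1
      have hjm : j ≤ m+1 := by omega
      rcases h.exists_vertex with ⟨s₀, hs₀, v, hv⟩
      have hpc : PureCycle m (restrictLink v δ) := h.rl hs₀ hv
      have hA := card_Tset_ge j hj1 v δ ∅ (Finset.empty_subset _) (by simp) (by simp)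
      rw [Finset.card_empty, add_zero] at hA
      by_cases hj : j = 1
      · subst hj
        have hIH := ih 1 le_rfl (by omega) _ hpc
        have h0 : 1 ≤ (Tset 0 δ).card := Tset_zero_card h.1
        have e0 : (Tset (1-1) (restrictLink v δ)).card = (Tset 0 (restrictLink v δ)).card := rfl
        have e1 : (Tset (1-1) δ).card = (Tset 0 δ).card := rfl
        have : Gfun 1 (m+1) = Gfun 1 m + 1 := by unfold Gfun; simp
        omega
      · have hj2' : 2 ≤ j := by omega
        have hB := card_Tset_ge (j-1) (by omega) v δ ∅ (Finset.empty_subset _)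
          (by simp) (by simp)
        rw [Finset.card_empty, add_zero] at hB
        have hIH1 := ih j (by omega) hjm _ hpc
        have hIH2 := ih (j-1) (by omega) (by omega) _ hpc
        have hstep := Gfun_step hj2' hjm
        have he : j - 1 - 1 = j - 2 := by omega
        rw [he] at hIH2 hB
        omega

end counting

end Stmt4Aux

namespace Stmt4Aux

section mainpart

variable {V : Type*} [LinearOrder V]

lemma bdry_zero' : bdry (0 : Finset V →₀ ℤ) = 0 := map_zero bdryHom

lemma zero_is_boundary (K : Cx V) (k : ℕ) : IsBoundaryOf K k 0 :=
  ⟨0, fun s hs => by simp at hs, bdry_zero'⟩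

lemma nontrivial_ne_zero {K : Cx V} {k : ℕ} {γ : Finset V →₀ ℤ}
    (h : IsNontrivialCycle K k γ) : γ ≠ 0 := by
  rintro rfl
  exact h.2 (zero_is_boundary K k)

lemma nontrivial_pureCycle {K : Cx V} {k : ℕ} {γ : Finset V →₀ ℤ}
    (h : IsNontrivialCycle K k γ) : PureCycle k γ :=
  ⟨nontrivial_ne_zero h, fun s hs => (h.1.1 s hs).2, h.1.2⟩

/-- If some vertex `v` dominates the support of a cycle, the cycle bounds. -/
lemma boundary_of_dominated {K : Cx V} {k : ℕ} {γ : Finset V →₀ ℤ} {v : V}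
    (hchain : IsChainOf K k γ) (hcyc : bdry γ = 0)
    (hdom : ∀ s ∈ γ.support, v ∉ s → insert v s ∈ K.faces) :
    IsBoundaryOf K k γ := by
  refine ⟨cone v γ, ?_, ?_⟩
  · intro t ht
    rcases mem_support_cone ht with ⟨hvt, hmem⟩
    have hface := hdom _ hmem (Finset.notMem_erase v t)
    rw [Finset.insert_erase hvt] at hface
    refine ⟨hface, ?_⟩
    have := (hchain _ hmem).2
    have hc := Finset.card_erase_of_mem hvt
    have : 1 ≤ t.card := Finset.card_pos.2 ⟨v, hvt⟩
    omega
  · have hce := cone_bdry v γ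
    rw [hcyc] at hce
    have hz : cone v (0 : Finset V →₀ ℤ) = 0 := by simpa using map_zero (coneHom v)
    rw [hz, add_zero] at hce
    exact hce

/-- The star lemma: for each vertex `v` there is a `d`-set `taust` in the support complex
which is "missing at `v`": `taust ∪ {v}` is not a face of `Γ`. -/
lemma star_lemma {Γ : Cx V} {d k : ℕ} {γ : Finset V →₀ ℤ}
    (h : IsNontrivialCycle (cliqueCx d Γ) k γ) (hk : d ≤ k) (v : V) :
    ∃ τ ∈ Tset d γ, v ∉ τ ∧ τ ∉ Tset d (restrictLink v γ) := by
  classical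
  have hndom : ¬ (∀ s ∈ γ.support, v ∉ s → insert v s ∈ (cliqueCx d Γ).faces) :=
    fun hdom => h.2 (boundary_of_dominated h.1.1 h.1.2 hdom)
  push_neg at hndom
  rcases hndom with ⟨sst, hsst, hvsst, hins⟩
  have hsface : sst ∈ (cliqueCx d Γ).faces := (h.1.1 sst hsst).1
  have hins' : ¬ (∀ t ⊆ insert v sst, t.card = d + 1 → t ∈ Γ.faces) := hins
  push_neg at hins'
  rcases hins' with ⟨t, htsub, htcard, htΓ⟩
  have hvt : v ∈ t := by
    by_contra hvt
    exact htΓ (hsface t ((Finset.subset_insert_iff_of_notMem hvt).1 htsub) htcard)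
  set τ := t.erase v with hτ
  have hτs : τ ⊆ sst := by
    have h1 : τ ⊆ (insert v sst).erase v := Finset.erase_subset_erase v htsub
    rwa [Finset.erase_insert hvsst] at h1
  have hτcard : τ.card = d := by
    rw [hτ, Finset.card_erase_of_mem hvt, htcard]
    omega
  have hvτ : v ∉ τ := Finset.notMem_erase v t
  have hτt : insert v τ = t := Finset.insert_erase hvt
  refine ⟨τ, mem_Tset.2 ⟨⟨sst, hsst, hτs⟩, hτcard⟩, hvτ, ?_⟩
  intro hmem
  rcases mem_Tset.1 hmem with ⟨⟨tauh, htauh, hτtauh⟩, _⟩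
  rcases mem_support_rl.1 htauh with ⟨hvtauh, hsmem⟩
  have hface : insert v tauh ∈ (cliqueCx d Γ).faces := (h.1.1 _ hsmem).1
  have : t ⊆ insert v tauh := by
    rw [← hτt]
    exact Finset.insert_subset_insert v hτtauh
  exact htΓ (hface t this htcard)

end mainpart

end Stmt4Aux

namespace Stmt4Aux

section t1

variable {V : Type*} [LinearOrder V]

/-- "Flag-like": every non-face contains a non-face with at most 2 vertices. -/
def Flaggy (Z : Cx V) : Prop :=
  ∀ s : Finset V, s ∉ Z.faces → ∃ t ⊆ s, t.card ≤ 2 ∧ t ∉ Z.faces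

lemma mem_link_iff {Z : Cx V} {v : V} {τ : Finset V} :
    τ ∈ (Cx.linkCx Z v).faces ↔ v ∉ τ ∧ insert v τ ∈ Z.faces := Iff.rfl

/-- Deletion of a vertex. -/
def delCx (Z : Cx V) (v : V) : Cx V :=
  ⟨{s | s ∈ Z.faces ∧ v ∉ s}, fun s t hs hts => ⟨Z.down hs.1 hts, fun hv => hs.2 (hts hv)⟩⟩

lemma mem_del_iff {Z : Cx V} {v : V} {s : Finset V} :
    s ∈ (delCx Z v).faces ↔ s ∈ Z.faces ∧ v ∉ s := Iff.rfl

lemma flaggy_link {Z : Cx V} (hZ : Flaggy Z) (v : V) : Flaggy (Cx.linkCx Z v) := by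
  intro τ hτ
  by_cases hvτ : v ∈ τ
  · refine ⟨{v}, Finset.singleton_subset_iff.2 hvτ, by simp, ?_⟩
    intro hmem
    exact (mem_link_iff.1 hmem).1 (Finset.mem_singleton_self v)
  · have hins : insert v τ ∉ Z.faces := by
      intro hmem
      exact hτ (mem_link_iff.2 ⟨hvτ, hmem⟩)
    rcases hZ _ hins with ⟨t, hts, htc, htZ⟩
    by_cases hvt : v ∈ t
    · refine ⟨t.erase v, ?_, ?_, ?_⟩
      · have h1 := Finset.erase_subset_erase v hts
        rwa [Finset.erase_insert hvτ] at h1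
      · have := Finset.card_erase_le (a := v) (s := t)
        omega
      · intro hmem
        have h2 := (mem_link_iff.1 hmem).2
        rw [Finset.insert_erase hvt] at h2
        exact htZ h2
    · refine ⟨t, (Finset.subset_insert_iff_of_notMem hvt).1 hts, htc, ?_⟩
      intro hmem
      exact htZ (Z.down (mem_link_iff.1 hmem).2 (Finset.subset_insert v t))

lemma flaggy_del {Z : Cx V} (hZ : Flaggy Z) (v : V) : Flaggy (delCx Z v) := by
  intro s hs
  by_cases hvs : v ∈ s
  · refine ⟨{v}, Finset.singleton_subset_iff.2 hvs, by simp, ?_⟩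
    intro hmem
    exact (mem_del_iff.1 hmem).2 (Finset.mem_singleton_self v)
  · have hsz : s ∉ Z.faces := fun h => hs (mem_del_iff.2 ⟨h, hvs⟩)
    rcases hZ _ hsz with ⟨t, hts, htc, htZ⟩
    exact ⟨t, hts, htc, fun h => htZ (mem_del_iff.1 h).1⟩

/-- The key induction: a non-bounding `k`-cycle in a flag-like complex forces at least
`2k+2` vertices. -/
lemma T1 : ∀ (n : ℕ) (W : Finset V) (Z : Cx V) (k : ℕ) (γ : Finset V →₀ ℤ),
    W.card ≤ n → Flaggy Z → IsChainOf Z k γ → bdry γ = 0 → ¬ IsBoundaryOf Z k γ →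
    (∀ u : V, {u} ∈ Z.faces → u ∈ W) → 2*k+2 ≤ W.card := by
  intro n
  induction n with
  | zero =>
    intro W Z k γ hWn _ hchain hcyc hnb hW
    exfalso
    have hne : γ ≠ 0 := by
      rintro rfl
      exact hnb (zero_is_boundary Z k)
    have hpure : PureCycle k γ := ⟨hne, fun s hs => (hchain s hs).2, hcyc⟩
    rcases hpure.exists_vertex with ⟨s₀, hs₀, v, hv⟩
    have hvW : v ∈ W := hW v (Z.down (hchain s₀ hs₀).1 (Finset.singleton_subset_iff.2 hv))
    have : 1 ≤ W.card := Finset.card_pos.2 ⟨v, hvW⟩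
    omega
  | succ n ih =>
    intro W Z k γ hWn hZ hchain hcyc hnb hW
    have hne : γ ≠ 0 := by
      rintro rfl
      exact hnb (zero_is_boundary Z k)
    have hpure : PureCycle k γ := ⟨hne, fun s hs => (hchain s hs).2, hcyc⟩
    have hvert : ∀ u (s : Finset V), s ∈ γ.support → u ∈ s → {u} ∈ Z.faces :=
      fun u s hs hu => Z.down (hchain s hs).1 (Finset.singleton_subset_iff.2 hu)
    rcases Nat.eq_zero_or_pos k with rfl | hk1
    · -- k = 0
      have h2 := hpure.support_card
      have h3 : 1 < γ.support.card := by omega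
      rcases Finset.one_lt_card.1 h3 with ⟨a, ha, b, hb, hab⟩
      rcases Finset.card_eq_one.1 ((hchain a ha).2) with ⟨ua, rfl⟩
      rcases Finset.card_eq_one.1 ((hchain b hb).2) with ⟨ub, rfl⟩
      have huab : ua ≠ ub := fun h => hab (by rw [h])
      have h1 : ua ∈ W := hW ua (hchain _ ha).1
      have h2' : ub ∈ W := hW ub (hchain _ hb).1
      have hsub : ({ua, ub} : Finset V) ⊆ W := by
        intro x hx
        rcases Finset.mem_insert.1 hx with rfl | hx
        · exact h1
        · exact (Finset.mem_singleton.1 hx) ▸ h2'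
      have := Finset.card_le_card hsub
      rw [Finset.card_pair huab] at this
      omega
    · obtain ⟨k', rfl⟩ : ∃ k', k = k'+1 := ⟨k-1, by omega⟩
      rcases hpure.exists_vertex with ⟨s₀, hs₀, v, hv⟩
      have hvW : v ∈ W := hW v (hvert v s₀ hs₀ hv)
      -- no domination
      by_cases hdom : ∀ s ∈ γ.support, v ∉ s → insert v s ∈ Z.faces
      · exact absurd (boundary_of_dominated hchain hcyc hdom) hnb
      push_neg at hdom
      rcases hdom with ⟨sst, hsst, hvsst, hins⟩
      rcases hZ _ hins with ⟨t, hts, htc, htZ⟩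
      have hvt : v ∈ t := by
        by_contra hvt
        exact htZ (Z.down (hchain sst hsst).1 ((Finset.subset_insert_iff_of_notMem hvt).1 hts))
      have hvZ : {v} ∈ Z.faces := hvert v s₀ hs₀ hv
      have htv : t ≠ {v} := fun h => htZ (h ▸ hvZ)
      have hwex : ∃ w ∈ t, w ≠ v := by
        by_contra hall
        push_neg at hall
        exact htv (Finset.eq_singleton_iff_unique_mem.2 ⟨hvt, fun x hx => hall x hx⟩)
      rcases hwex with ⟨w, hwt, hwv⟩
      have htvw : t = {v, w} := by
        have h5 : ({v, w} : Finset V) ⊆ t := by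
          intro x hx
          rcases Finset.mem_insert.1 hx with rfl | hx
          · exact hvt
          · exact (Finset.mem_singleton.1 hx) ▸ hwt
        have h6 : t.card ≤ ({v, w} : Finset V).card := by
          rw [Finset.card_pair (Ne.symm hwv)]
          exact htc
        exact (Finset.eq_of_subset_of_card_le h5 h6).symm
      have hvwZ : ({v, w} : Finset V) ∉ Z.faces := htvw ▸ htZ
      have hwsst : w ∈ sst := by
        rcases Finset.mem_insert.1 (hts hwt) with h | h
        · exact absurd h hwv
        · exact h
      have hwW : w ∈ W := hW w (hvert w sst hsst hwsst)
      -- link cycle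
      have hchainv : IsChainOf (Cx.linkCx Z v) k' (restrictLink v γ) := by
        intro τ hτ
        rcases mem_support_rl.1 hτ with ⟨hvτ, hsm⟩
        refine ⟨mem_link_iff.2 ⟨hvτ, (hchain _ hsm).1⟩, ?_⟩
        have hc1 := (hchain _ hsm).2
        have hc2 := Finset.card_insert_of_notMem hvτ
        omega
      have hcycv : bdry (restrictLink v γ) = 0 := by
        rw [rl_bdry, hcyc]
        have hz : restrictLink v (0 : Finset V →₀ ℤ) = 0 := by
          simpa using map_zero (rlHom v)
        rw [hz, neg_zero]
      by_cases hbd : IsBoundaryOf (Cx.linkCx Z v) k' (restrictLink v γ)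
      · -- subcase (b): push the cycle off v
        rcases hbd with ⟨β₀, hβc, hβb⟩
        have hβfree : ∀ s' ∈ (-β₀ : Finset V →₀ ℤ).support, v ∉ s' := by
          intro s' hs'
          rw [Finsupp.support_neg] at hs'
          exact (mem_link_iff.1 (hβc s' hs').1).1
        have hCchain : ∀ t' ∈ (cone v (-β₀)).support,
            t' ∈ Z.faces ∧ t'.card = k'+3 := by
          intro t' ht'
          rcases mem_support_cone ht' with ⟨hvt', hmem⟩
          have hmem₀ : t'.erase v ∈ β₀.support := by
            rwa [Finsupp.support_neg] at hmem
          have hface := (mem_link_iff.1 (hβc _ hmem₀).1).2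
          rw [Finset.insert_erase hvt'] at hface
          have hc1 := (hβc _ hmem₀).2
          have hc2 := Finset.card_erase_of_mem hvt'
          have hc3 : 1 ≤ t'.card := Finset.card_pos.2 ⟨v, hvt'⟩
          exact ⟨hface, by omega⟩
        set C := cone v (-β₀) with hC
        set γ' := γ - bdry C with hγ'
        have hγ'chain : IsChainOf Z (k'+1) γ' := by
          intro s hs
          have hs' := Finsupp.support_sub hs
          rcases Finset.mem_union.1 hs' with h | h
          · exact hchain s h
          · rcases mem_support_bdry h with ⟨sC, hsC, u, huC, rfl⟩
            refine ⟨Z.down (hCchain sC hsC).1 (Finset.erase_subset u sC), ?_⟩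
            have hc1 := (hCchain sC hsC).2
            have hc2 := Finset.card_erase_of_mem huC
            omega
        have hcyc' : bdry γ' = 0 := by
          have hsub : bdry (γ - bdry C) = bdry γ - bdry (bdry C) := by
            simpa using map_sub bdryHom γ (bdry C)
          rw [hγ', hsub, hcyc, bdry_bdry, sub_zero]
        have hrl : restrictLink v γ' = 0 := by
          have hsub : restrictLink v (γ - bdry C) =
              restrictLink v γ - restrictLink v (bdry C) := by
            simpa using map_sub (rlHom v) γ (bdry C)
          have h1 := rl_bdry v C
          have h2 : restrictLink v (bdry C) = - bdry (restrictLink v C) := by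
            rw [h1, neg_neg]
          have h3 : restrictLink v C = -β₀ := rl_cone v (-β₀) hβfree
          have h4 : bdry (-β₀ : Finset V →₀ ℤ) = - bdry β₀ := by
            simpa using map_neg bdryHom β₀
          rw [hγ', hsub, h2, h3, h4, hβb, neg_neg, sub_self]
        have hvfree := rl_eq_zero_vfree hrl
        have hchain₂ : IsChainOf (delCx Z v) (k'+1) γ' := by
          intro s hs
          exact ⟨mem_del_iff.2 ⟨(hγ'chain s hs).1, hvfree s hs⟩, (hγ'chain s hs).2⟩
        have hnb₂ : ¬ IsBoundaryOf (delCx Z v) (k'+1) γ' := by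
          rintro ⟨δ, hδc, hδb⟩
          apply hnb
          refine ⟨δ + C, ?_, ?_⟩
          · intro s hs
            rcases Finset.mem_union.1 (Finsupp.support_add hs) with h | h
            · exact ⟨(mem_del_iff.1 (hδc s h).1).1, (hδc s h).2⟩
            · exact ⟨(hCchain s h).1, (hCchain s h).2⟩
          · have hadd : bdry (δ + C) = bdry δ + bdry C := by
              simpa using map_add bdryHom δ C
            rw [hadd, hδb, hγ']
            abel
        have hW₂ : ∀ u : V, {u} ∈ (delCx Z v).faces → u ∈ W.erase v := by
          intro u hu
          rcases mem_del_iff.1 hu with ⟨huZ, hvu⟩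
          have hune : u ≠ v := fun h => hvu (h ▸ Finset.mem_singleton_self u)
          exact Finset.mem_erase.2 ⟨hune, hW u huZ⟩
        have hcarde : (W.erase v).card = W.card - 1 := Finset.card_erase_of_mem hvW
        have hIH := ih (W.erase v) (delCx Z v) (k'+1) γ'
          (by omega) (flaggy_del hZ v) hchain₂ hcyc' hnb₂ hW₂
        have : 1 ≤ W.card := Finset.card_pos.2 ⟨v, hvW⟩
        omega
      · -- subcase (a): nontrivial link cycle
        have hW' : ∀ u : V, {u} ∈ (Cx.linkCx Z v).faces → u ∈ (W.erase v).erase w := by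
          intro u hu
          rcases mem_link_iff.1 hu with ⟨hvu, hinsZ⟩
          have hune : u ≠ v := fun h => hvu (h ▸ Finset.mem_singleton_self u)
          have huZ : {u} ∈ Z.faces := Z.down hinsZ (Finset.subset_insert v {u})
          have hunw : u ≠ w := by
            rintro rfl
            exact hvwZ hinsZ
          exact Finset.mem_erase.2 ⟨hunw, Finset.mem_erase.2 ⟨hune, hW u huZ⟩⟩
        have hwWe : w ∈ W.erase v := Finset.mem_erase.2 ⟨hwv, hwW⟩
        have hc1 : (W.erase v).card = W.card - 1 := Finset.card_erase_of_mem hvW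
        have hc2 : ((W.erase v).erase w).card = (W.erase v).card - 1 :=
          Finset.card_erase_of_mem hwWe
        have hc3 : 1 ≤ (W.erase v).card := Finset.card_pos.2 ⟨w, hwWe⟩
        have hc4 : 1 ≤ W.card := Finset.card_pos.2 ⟨v, hvW⟩
        have hIH := ih ((W.erase v).erase w) (Cx.linkCx Z v) k' (restrictLink v γ)
          (by omega) (flaggy_link hZ v) hchainv hcycv hbd hW'
        omega

end t1

end Stmt4Aux

namespace Stmt4Aux

section final

variable {V : Type*} [LinearOrder V]

lemma mem_induced_iff {K : Cx V} {S : Finset V} {s : Finset V} :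
    s ∈ (K.induced S).faces ↔ s ∈ K.faces ∧ s ⊆ S := Iff.rfl

/-- The hard case `d = 1`: at least `2k+2` vertices in the support. -/
lemma hard_d1 {Γ : Cx V} {k : ℕ} {γ : Finset V →₀ ℤ}
    (h : IsNontrivialCycle (cliqueCx 1 Γ) k γ) (hk : 1 ≤ k) :
    2*k + 2 ≤ (Tset 1 γ).card := by
  classical
  set S := γ.support.biUnion id with hS
  set Z := (cliqueCx 1 Γ).induced S with hZdef
  have hchainZ : IsChainOf Z k γ := by
    intro s hs
    refine ⟨mem_induced_iff.2 ⟨(h.1.1 s hs).1, ?_⟩, (h.1.1 s hs).2⟩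
    exact Finset.subset_biUnion_of_mem id hs
  have hnbZ : ¬ IsBoundaryOf Z k γ := by
    rintro ⟨β, hβc, hβb⟩
    exact h.2 ⟨β, fun s hs => ⟨(mem_induced_iff.1 (hβc s hs).1).1, (hβc s hs).2⟩, hβb⟩
  have hflag : Flaggy Z := by
    intro s hs
    by_cases hsub : s ⊆ S
    · have hsX : s ∉ (cliqueCx 1 Γ).faces := fun hX => hs (mem_induced_iff.2 ⟨hX, hsub⟩)
      have hsX' : ¬ ∀ t ⊆ s, t.card = 1 + 1 → t ∈ Γ.faces := hsX
      push_neg at hsX'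
      rcases hsX' with ⟨t, hts, htc, htΓ⟩
      refine ⟨t, hts, by omega, ?_⟩
      intro htZ
      have htX : t ∈ (cliqueCx 1 Γ).faces := (mem_induced_iff.1 htZ).1
      exact htΓ (htX t (Finset.Subset.refl t) htc)
    · rcases Finset.not_subset.1 hsub with ⟨u, hus, huS⟩
      refine ⟨{u}, Finset.singleton_subset_iff.2 hus, by simp, ?_⟩
      intro huZ
      exact huS (Finset.singleton_subset_iff.1 (mem_induced_iff.1 huZ).2)
  have hWZ : ∀ u : V, {u} ∈ Z.faces → u ∈ S :=
    fun u hu => Finset.singleton_subset_iff.1 (mem_induced_iff.1 hu).2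
  have hT1 := T1 S.card S Z k γ le_rfl hflag hchainZ h.1.2 hnbZ hWZ
  have himg : S.image (fun u => ({u} : Finset V)) ⊆ Tset 1 γ := by
    intro x hx
    rcases Finset.mem_image.1 hx with ⟨u, hu, rfl⟩
    rcases Finset.mem_biUnion.1 hu with ⟨s, hs, hus⟩
    exact mem_Tset.2 ⟨⟨s, hs, Finset.singleton_subset_iff.2 hus⟩, Finset.card_singleton u⟩
  have hcard : (S.image (fun u => ({u} : Finset V))).card = S.card :=
    Finset.card_image_of_injective S Finset.singleton_injective
  have hle := Finset.card_le_card himg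
  omega

end final

end Stmt4Aux

open Stmt4Aux in
theorem stmt4' {V : Type*} [LinearOrder V] (Γ : Cx V) (d k : ℕ) (hd : 1 ≤ d)
    (hk : d ≤ k + 1) (γ : Finset V →₀ ℤ)
    (h : IsNontrivialCycle (cliqueCx d Γ) k γ) :
    (d+1) * (k + 1 - d) + d + 1 ≤
      Nat.card {t : Finset V // (∃ s ∈ γ.support, t ⊆ s) ∧ t.card = d} := by
  classical
  have hpure : PureCycle k γ := nontrivial_pureCycle h
  have hbridge : Nat.card {t : Finset V // (∃ s ∈ γ.support, t ⊆ s) ∧ t.card = d}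
      = (Tset d γ).card := by
    have he : ∀ t : Finset V, ((∃ s ∈ γ.support, t ⊆ s) ∧ t.card = d) ↔ t ∈ Tset d γ :=
      fun t => mem_Tset.symm
    rw [Nat.card_congr (Equiv.subtypeEquivRight he), Nat.card_eq_finsetCard]
  rw [hbridge]
  rcases Nat.eq_or_lt_of_le hk with hkd | hkd
  · -- k = d - 1, i.e. d = k+1
    subst hkd
    have h1 : Tset (k+1) γ = γ.support := Tset_top hpure.2.1
    have h2 := hpure.support_card
    rw [h1]
    have hzz : (k+1+1) * (k+1-(k+1)) = 0 := by
      have e : k+1-(k+1) = 0 := by omega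
      rw [e, Nat.mul_zero]
    omega
  · -- d ≤ k
    have hdk : d ≤ k := by omega
    by_cases hhard : d = 1 ∧ 2 ≤ k
    · rcases hhard with ⟨rfl, hk2⟩
      have := hard_d1 h (by omega)
      have hg : (1+1) * (k+1-1) + 1 + 1 = 2*k+2 := by
        have e : k+1-1 = k := by omega
        omega
      omega
    · -- combinatorial case
      have hcase : 2 ≤ d ∨ k = 1 := by
        rcases Nat.lt_or_ge d 2 with h2 | h2
        · right
          have hd1 : d = 1 := by omega
          rcases Nat.lt_or_ge k 2 with hk2 | hk2
          · omega
          · exact absurd ⟨hd1, hk2⟩ hhard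
        · left; exact h2
      rcases hpure.exists_vertex with ⟨s₀, hs₀, v, hv⟩
      rcases star_lemma h hdk v with ⟨taust, hτT, hτv, hτrl⟩
      have hk1 : 1 ≤ k := by omega
      have hpure' : PureCycle ((k-1)+1) γ := by
        have e : k - 1 + 1 = k := by omega
        rw [e]; exact hpure
      have hpc : PureCycle (k-1) (restrictLink v γ) := hpure'.rl hs₀ hv
      have hcnt := card_Tset_ge d hd v γ {taust}
        (Finset.singleton_subset_iff.2 hτT)
        (fun t ht => (Finset.mem_singleton.1 ht) ▸ hτv)
        (fun t ht => (Finset.mem_singleton.1 ht) ▸ hτrl)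
      rw [Finset.card_singleton] at hcnt
      have hG := Glemma (k-1) d hd (by omega) _ hpc
      -- arithmetic
      rcases hcase with h2 | hk1'
      · have e1 : k-1+2-d = k+1-d := by omega
        have e2 : Gfun d (k-1) = (d+1)*(k+1-d) + d := by
          unfold Gfun
          rw [if_neg (by omega), if_neg (by omega), e1]
        omega
      · subst hk1'
        have hd1 : d = 1 := by omega
        subst hd1
        have e2 : Gfun 1 0 = 3 := rfl
        have e3 : Gfun 1 (1-1) = Gfun 1 0 := rfl
        have e4 : (Tset (1-1) (restrictLink v γ)).card = (Tset 0 (restrictLink v γ)).card := rfl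
        omega

/-- If `γ` is a nontrivial `k`-cycle in the `d`-clique complex
`Δ_d(Γ)` (with `k ≥ d − 1`), then the complex generated by `supp(γ)` contains at
least `(d+1)(k−d+1) + d + 1` faces of dimension `d−1`. -/
theorem stmt4 {V : Type*} [LinearOrder V] (Γ : Cx V) (d k : ℕ) (hd : 1 ≤ d)
    (hk : d ≤ k + 1) (γ : Finset V →₀ ℤ)
    (h : IsNontrivialCycle (cliqueCx d Γ) k γ) :
    (d+1) * (k + 1 - d) + d + 1 ≤
      Nat.card {t : Finset V // (∃ s ∈ γ.support, t ⊆ s) ∧ t.card = d} :=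
  stmt4' Γ d k hd hk γ h
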